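/- If 0 < c₁ < π², then the equation tan y = ((c₁ - y²)·y)/(c₁ + y²) has a solution ẏ in the interval (√c₁, π), and every such solution satisfies π/2 < ẏ < π. -/
import Mathlib

open Real Set Filter Topology

lemma rhs_neg_aux (c₁ : ℝ) (h₀ : 0 < c₁) {y : ℝ} (hy : Real.sqrt c₁ < y) :
    ((c₁ - y ^ 2) * y) / (c₁ + y ^ 2) < 0 := by
  have hs : 0 < Real.sqrt c₁ := Real.sqrt_pos.mpr h₀
  have hy0 : 0 < y := hs.trans hy
  have hyy : c₁ < y ^ 2 := by
    have := Real.sq_sqrt h₀.le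
    nlinarith [Real.sqrt_nonneg c₁]
  apply div_neg_of_neg_of_pos
  · nlinarith
  · nlinarith

theorem tan_equation_solution (c₁ : ℝ) (h₀ : 0 < c₁) (h₁ : c₁ < Real.pi ^ 2) :
    (∃ y ∈ Set.Ioo (Real.sqrt c₁) Real.pi,
        Real.tan y = ((c₁ - y ^ 2) * y) / (c₁ + y ^ 2)) ∧
    ∀ y ∈ Set.Ioo (Real.sqrt c₁) Real.pi,
      Real.tan y = ((c₁ - y ^ 2) * y) / (c₁ + y ^ 2) →
        Real.pi / 2 < y ∧ y < Real.pi := by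
  have hπ : 0 < Real.pi := Real.pi_pos
  have hsπ : Real.sqrt c₁ < Real.pi := by
    have : Real.sqrt c₁ < Real.sqrt (Real.pi ^ 2) := by
      exact Real.sqrt_lt_sqrt h₀.le h₁
    rwa [Real.sqrt_sq hπ.le] at this
  -- second part first, as a lemma
  have hsecond : ∀ y ∈ Set.Ioo (Real.sqrt c₁) Real.pi,
      Real.tan y = ((c₁ - y ^ 2) * y) / (c₁ + y ^ 2) →
        Real.pi / 2 < y ∧ y < Real.pi := by
    rintro y ⟨hy1, hy2⟩ heq
    refine ⟨?_, hy2⟩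
    have hrhs : ((c₁ - y ^ 2) * y) / (c₁ + y ^ 2) < 0 := rhs_neg_aux c₁ h₀ hy1
    have hy0 : 0 < y := (Real.sqrt_pos.mpr h₀).trans hy1
    by_contra hle
    push_neg at hle
    rcases lt_or_eq_of_le hle with h | h
    · have : 0 < Real.tan y := Real.tan_pos_of_pos_of_lt_pi_div_two hy0 h
      linarith [heq ▸ this]
    · rw [h] at heq hrhs
      rw [Real.tan_pi_div_two] at heq
      linarith
  refine ⟨?_, hsecond⟩
  -- existence: find a ∈ [√c₁, π) with π/2 < a and tan a < RHS(a)
  set f : ℝ → ℝ := fun y => Real.tan y - ((c₁ - y ^ 2) * y) / (c₁ + y ^ 2) with hf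
  have hfπ : 0 < f Real.pi := by
    have : ((c₁ - Real.pi ^ 2) * Real.pi) / (c₁ + Real.pi ^ 2) < 0 :=
      rhs_neg_aux c₁ h₀ hsπ
    simp only [hf, Real.tan_pi]
    linarith
  obtain ⟨a, haL, haU, hsa, hfa⟩ : ∃ a, Real.pi / 2 < a ∧ a < Real.pi ∧
      Real.sqrt c₁ ≤ a ∧ f a < 0 := by
    rcases lt_or_ge (Real.pi / 2) (Real.sqrt c₁) with hc | hc
    · refine ⟨Real.sqrt c₁, hc, hsπ, le_refl _, ?_⟩
      have htan : Real.tan (Real.sqrt c₁) < 0 := by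
        rw [Real.tan_eq_sin_div_cos]
        apply div_neg_of_pos_of_neg
        · exact Real.sin_pos_of_pos_of_lt_pi (by linarith) hsπ
        · exact Real.cos_neg_of_pi_div_two_lt_of_lt hc (by linarith)
      have hrhs : ((c₁ - (Real.sqrt c₁) ^ 2) * Real.sqrt c₁) / (c₁ + (Real.sqrt c₁) ^ 2) = 0 := by
        rw [Real.sq_sqrt h₀.le]; simp
      simp only [hf, hrhs]
      linarith
    · -- use tan → +∞ at (π/2)⁻ to get x with tan x > π, set a = π - x
      have hev : ∀ᶠ x in 𝓝[<] (Real.pi / 2), Real.pi < Real.tan x :=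
        Real.tendsto_tan_pi_div_two.eventually_gt_atTop Real.pi
      have hev2 : ∀ᶠ x in 𝓝[<] (Real.pi / 2), x ∈ Set.Ioo 0 (Real.pi / 2) :=
        Ioo_mem_nhdsLT_of_mem ⟨by linarith, le_refl _⟩
      obtain ⟨x, hx1, hx2⟩ := (hev.and hev2).exists
      refine ⟨Real.pi - x, by linarith [hx2.2], by linarith [hx2.1], by linarith [hx2.2, hc], ?_⟩
      have htan : Real.tan (Real.pi - x) = -Real.tan x := Real.tan_pi_sub x
      have hrb : -(Real.pi - x) < ((c₁ - (Real.pi - x) ^ 2) * (Real.pi - x)) / (c₁ + (Real.pi - x) ^ 2) := by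
        rw [lt_div_iff₀ (by positivity)]
        nlinarith [hx2.1, hx2.2, h₀]
      simp only [hf, htan]
      have : Real.pi - x < Real.pi := by linarith [hx2.1]
      nlinarith [hrb]
  -- continuity on [a, π]
  have hcont : ContinuousOn f (Set.Icc a Real.pi) := by
    apply ContinuousOn.sub
    · apply Real.continuousOn_tan.mono
      intro x hx
      have hx1 := hx.1
      have hx2 := hx.2
      have : Real.cos x < 0 :=
        Real.cos_neg_of_pi_div_two_lt_of_lt (lt_of_lt_of_le haL hx1)
          (by linarith [hπ])
      exact ne_of_lt this
    · apply ContinuousOn.div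
      · fun_prop
      · fun_prop
      · intro x hx
        have hx0 : (0:ℝ) ≤ x := le_trans (by linarith) hx.1
        positivity
  have hsub : Set.Ioo (f a) (f Real.pi) ⊆ f '' Set.Ioo a Real.pi :=
    intermediate_value_Ioo haU.le hcont
  obtain ⟨y₀, hy₀mem, hy₀⟩ := hsub ⟨hfa, hfπ⟩
  refine ⟨y₀, ⟨lt_of_le_of_lt hsa hy₀mem.1, hy₀mem.2⟩, ?_⟩
  have h0 : Real.tan y₀ - ((c₁ - y₀ ^ 2) * y₀) / (c₁ + y₀ ^ 2) = 0 := hy₀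
  linarith
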